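/- The 3-uniform hypergraph E_{2,2,2}^{(3)} = Ẽ_6^{(3)} — three loose paths of length 2 attached at a common vertex — is 1/4-normal via the labeling (from the center outward along each branch): center gets 1/3 in each of the three inner edges, each inner edge has weights (1/3, 3/4, 1) and each outer edge has weights (1/4, 1, 1); hence ρ(Ẽ_6^{(3)}) = 2·4^{1/3}. -/
import Mathlib


open Finset

/-- Spectral radius of an `r`-uniform hypergraph with edge set `E`. -/
noncomputable def specRad (r : ℕ) {V : Type} [Fintype V] (E : Finset (Finset V)) : ℝ :=
  sSup {ρ : ℝ | ∃ x : V → ℝ, (∀ v, 0 ≤ x v) ∧ x ≠ 0 ∧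
    ρ = (Nat.factorial r : ℝ) * (∑ e ∈ E, ∏ v ∈ e, x v) / (∑ v, x v ^ r)}

/-- Vertex set of `Ẽ₆^{(3)}`: the center, plus for each of the 3 branches a spine
vertex `(b,0)`, an inner-edge leaf `(b,1)`, and two outer-edge leaves `(b,2)`, `(b,3)`. -/
abbrev V18 : Type := Unit ⊕ Fin 3 × Fin 4

/-- Inner edge of branch `b`: center, spine vertex, and one leaf. -/
def inner18 (b : Fin 3) : Finset V18 :=
  {Sum.inl (), Sum.inr (b, 0), Sum.inr (b, 1)}

/-- Outer edge of branch `b`: spine vertex and two leaves. -/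
def outer18 (b : Fin 3) : Finset V18 :=
  {Sum.inr (b, 0), Sum.inr (b, 2), Sum.inr (b, 3)}

/-- The edge set of `Ẽ₆^{(3)} = E_{2,2,2}^{(3)}`. -/
def E18 : Finset (Finset V18) :=
  Finset.image inner18 Finset.univ ∪ Finset.image outer18 Finset.univ

/-- The 1/4-normal labeling: center gets `1/3` in each inner edge, the spine
vertex of a branch gets `3/4` in the inner edge and `1/4` in the outer edge,
leaves get `1`. -/
noncomputable def B18 : V18 → Finset V18 → ℝ := fun v e =>
  if v ∈ e then
    Sum.elim (fun _ => (1/3 : ℝ))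
      (fun p => if p.2 = 0 then (if e = inner18 p.1 then 3/4 else 1/4) else 1) v
  else 0

lemma outer_ne_inner (b b' : Fin 3) : outer18 b ≠ inner18 b' := by
  intro h
  have : Sum.inl () ∈ outer18 b := by rw [h]; simp [inner18]
  simp [outer18] at this

lemma inner_inj' (b b' : Fin 3) (h : inner18 b = inner18 b') : b = b' := by
  have : Sum.inr (b, (0 : Fin 4)) ∈ inner18 b' := by rw [← h]; simp [inner18]
  simpa [inner18, Prod.ext_iff] using this

lemma B18_center_inner (b : Fin 3) : B18 (Sum.inl ()) (inner18 b) = 1/3 := by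
  simp [B18, inner18]

lemma B18_center_outer (b : Fin 3) : B18 (Sum.inl ()) (outer18 b) = 0 := by
  simp [B18, outer18]

lemma B18_spine_inner (b b' : Fin 3) :
    B18 (Sum.inr (b, 0)) (inner18 b') = if b' = b then 3/4 else 0 := by
  by_cases h : b' = b
  · subst h; simp [B18, inner18]
  · simp [B18, inner18, Ne.symm h, h]

lemma B18_spine_outer (b b' : Fin 3) :
    B18 (Sum.inr (b, 0)) (outer18 b') = if b' = b then 1/4 else 0 := by
  by_cases h : b' = b
  · subst h
    simp only [B18, Sum.elim_inr]
    rw [if_pos (by simp [outer18] : (Sum.inr (b', (0:Fin 4)) : V18) ∈ outer18 b')]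
    simp [outer_ne_inner b' b']
  · simp [B18, outer18, Ne.symm h, h]

lemma B18_l1_inner (b b' : Fin 3) :
    B18 (Sum.inr (b, 1)) (inner18 b') = if b' = b then 1 else 0 := by
  by_cases h : b' = b
  · subst h; simp [B18, inner18]
  · simp [B18, inner18, Ne.symm h, h]

lemma B18_l1_outer (b b' : Fin 3) : B18 (Sum.inr (b, 1)) (outer18 b') = 0 := by
  simp [B18, outer18]

lemma B18_l2_inner (b b' : Fin 3) : B18 (Sum.inr (b, 2)) (inner18 b') = 0 := by
  simp [B18, inner18]

lemma B18_l2_outer (b b' : Fin 3) :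
    B18 (Sum.inr (b, 2)) (outer18 b') = if b' = b then 1 else 0 := by
  by_cases h : b' = b
  · subst h; simp [B18, outer18]
  · simp [B18, outer18, Ne.symm h, h]

lemma B18_l3_inner (b b' : Fin 3) : B18 (Sum.inr (b, 3)) (inner18 b') = 0 := by
  simp [B18, inner18]

lemma B18_l3_outer (b b' : Fin 3) :
    B18 (Sum.inr (b, 3)) (outer18 b') = if b' = b then 1 else 0 := by
  by_cases h : b' = b
  · subst h; simp [B18, outer18]
  · simp [B18, outer18, Ne.symm h, h]

lemma sum_E18 (f : Finset V18 → ℝ) :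
    ∑ e ∈ E18, f e = (∑ b : Fin 3, f (inner18 b)) + ∑ b : Fin 3, f (outer18 b) := by
  rw [E18, Finset.sum_union (by decide), Finset.sum_image (by decide), Finset.sum_image (by decide)]

lemma prod_inner (f : V18 → ℝ) (b : Fin 3) :
    ∏ v ∈ inner18 b, f v = f (Sum.inl ()) * (f (Sum.inr (b, 0)) * f (Sum.inr (b, 1))) := by
  rw [inner18, Finset.prod_insert (by simp), Finset.prod_insert (by simp [Prod.ext_iff]),
    Finset.prod_singleton]

lemma prod_outer (f : V18 → ℝ) (b : Fin 3) :
    ∏ v ∈ outer18 b, f v = f (Sum.inr (b, 0)) * (f (Sum.inr (b, 2)) * f (Sum.inr (b, 3))) := by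
  rw [outer18, Finset.prod_insert (by simp [Prod.ext_iff]),
    Finset.prod_insert (by simp [Prod.ext_iff]), Finset.prod_singleton]

lemma amgm3 (a b c : ℝ) (ha : 0 ≤ a) (hb : 0 ≤ b) (hc : 0 ≤ c) :
    3 * (a * b * c) ≤ a ^ 3 + b ^ 3 + c ^ 3 := by
  nlinarith [mul_nonneg (add_nonneg (add_nonneg ha hb) hc) (sq_nonneg (a - b)),
    mul_nonneg (add_nonneg (add_nonneg ha hb) hc) (sq_nonneg (b - c)),
    mul_nonneg (add_nonneg (add_nonneg ha hb) hc) (sq_nonneg (a - c))]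

lemma rpow_third_cube {a : ℝ} (ha : 0 ≤ a) : (a ^ ((1:ℝ)/3)) ^ 3 = a := by
  rw [← Real.rpow_natCast (a ^ ((1:ℝ)/3)) 3, ← Real.rpow_mul ha]
  norm_num

lemma edge_bound (b1 b2 b3 x y z : ℝ) (hb1 : 0 ≤ b1) (hb2 : 0 ≤ b2) (hb3 : 0 ≤ b3)
    (hb : b1 * b2 * b3 = 1/4) (hx : 0 ≤ x) (hy : 0 ≤ y) (hz : 0 ≤ z) :
    3 * (x * y * z) ≤ (4:ℝ) ^ ((1:ℝ)/3) * (b1 * x ^ 3 + b2 * y ^ 3 + b3 * z ^ 3) := by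
  set t : ℝ := (1:ℝ)/3
  have key := amgm3 (b1 ^ t * x) (b2 ^ t * y) (b3 ^ t * z)
    (mul_nonneg (Real.rpow_nonneg hb1 t) hx) (mul_nonneg (Real.rpow_nonneg hb2 t) hy)
    (mul_nonneg (Real.rpow_nonneg hb3 t) hz)
  have e1 : (b1 ^ t * x) ^ 3 = b1 * x ^ 3 := by rw [mul_pow, rpow_third_cube hb1]
  have e2 : (b2 ^ t * y) ^ 3 = b2 * y ^ 3 := by rw [mul_pow, rpow_third_cube hb2]
  have e3 : (b3 ^ t * z) ^ 3 = b3 * z ^ 3 := by rw [mul_pow, rpow_third_cube hb3]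
  have e4 : b1 ^ t * x * (b2 ^ t * y) * (b3 ^ t * z) = (1/4 : ℝ) ^ t * (x * y * z) := by
    rw [show b1 ^ t * x * (b2 ^ t * y) * (b3 ^ t * z)
        = (b1 ^ t * b2 ^ t * b3 ^ t) * (x * y * z) by ring,
      ← Real.mul_rpow hb1 hb2, ← Real.mul_rpow (mul_nonneg hb1 hb2) hb3, hb]
  rw [e1, e2, e3, e4] at key
  have hK : (0:ℝ) ≤ (4:ℝ) ^ t := Real.rpow_nonneg (by norm_num) t
  have hKq : (4:ℝ) ^ t * (1/4 : ℝ) ^ t = 1 := by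
    rw [← Real.mul_rpow (by norm_num) (by norm_num)]
    norm_num
  calc 3 * (x * y * z) = (4:ℝ) ^ t * (3 * ((1/4:ℝ) ^ t * (x * y * z))) := by
        rw [show (4:ℝ) ^ t * (3 * ((1/4:ℝ) ^ t * (x * y * z)))
            = 3 * (((4:ℝ) ^ t * (1/4:ℝ) ^ t) * (x * y * z)) by ring, hKq]; ring
    _ ≤ (4:ℝ) ^ t * (b1 * x ^ 3 + b2 * y ^ 3 + b3 * z ^ 3) :=
        mul_le_mul_of_nonneg_left key hK

lemma inner_bd (x y z : ℝ) (hx : 0 ≤ x) (hy : 0 ≤ y) (hz : 0 ≤ z) :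
    3 * (x * y * z) ≤ (4:ℝ) ^ ((1:ℝ)/3) * (1/3 * x ^ 3 + 3/4 * y ^ 3 + 1 * z ^ 3) :=
  edge_bound (1/3) (3/4) 1 x y z (by norm_num) (by norm_num) (by norm_num) (by norm_num) hx hy hz

lemma outer_bd (x y z : ℝ) (hx : 0 ≤ x) (hy : 0 ≤ y) (hz : 0 ≤ z) :
    3 * (x * y * z) ≤ (4:ℝ) ^ ((1:ℝ)/3) * (1/4 * x ^ 3 + 1 * y ^ 3 + 1 * z ^ 3) :=
  edge_bound (1/4) 1 1 x y z (by norm_num) (by norm_num) (by norm_num) (by norm_num) hx hy hz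

lemma ub18 : ∀ ρ ∈ {ρ : ℝ | ∃ x : V18 → ℝ, (∀ v, 0 ≤ x v) ∧ x ≠ 0 ∧
    ρ = (Nat.factorial 3 : ℝ) * (∑ e ∈ E18, ∏ v ∈ e, x v) / (∑ v, x v ^ 3)},
    ρ ≤ 2 * (4:ℝ) ^ ((1:ℝ)/3) := by
  rintro ρ ⟨x, hx, hx0, rfl⟩
  have hS : 0 < ∑ v : V18, x v ^ 3 := by
    obtain ⟨v, hv⟩ := Function.ne_iff.mp hx0
    exact Finset.sum_pos' (fun i _ => pow_nonneg (hx i) 3)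
      ⟨v, Finset.mem_univ v, pow_pos ((hx v).lt_of_ne (Ne.symm hv)) 3⟩
  rw [div_le_iff₀ hS]
  have hfact : (Nat.factorial 3 : ℝ) = 6 := by norm_num [Nat.factorial]
  rw [hfact, sum_E18]
  simp only [prod_inner, prod_outer, Fin.sum_univ_three,
    Fintype.sum_sum_type, Fintype.sum_prod_type, Fin.sum_univ_four,
    Finset.univ_unique, Finset.sum_singleton]
  have h1 := inner_bd (x (Sum.inl ())) (x (Sum.inr (0, 0))) (x (Sum.inr (0, 1)))
    (hx _) (hx _) (hx _)
  have h2 := inner_bd (x (Sum.inl ())) (x (Sum.inr (1, 0))) (x (Sum.inr (1, 1)))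
    (hx _) (hx _) (hx _)
  have h3 := inner_bd (x (Sum.inl ())) (x (Sum.inr (2, 0))) (x (Sum.inr (2, 1)))
    (hx _) (hx _) (hx _)
  have h4 := outer_bd (x (Sum.inr (0, 0))) (x (Sum.inr (0, 2))) (x (Sum.inr (0, 3)))
    (hx _) (hx _) (hx _)
  have h5 := outer_bd (x (Sum.inr (1, 0))) (x (Sum.inr (1, 2))) (x (Sum.inr (1, 3)))
    (hx _) (hx _) (hx _)
  have h6 := outer_bd (x (Sum.inr (2, 0))) (x (Sum.inr (2, 2))) (x (Sum.inr (2, 3)))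
    (hx _) (hx _) (hx _)
  nlinarith [h1, h2, h3, h4, h5, h6]

noncomputable def x0 : V18 → ℝ :=
  Sum.elim (fun _ => (9:ℝ) ^ ((1:ℝ)/3))
    (fun p => if p.2 = 0 then (4:ℝ) ^ ((1:ℝ)/3) else if p.2 = 1 then (3:ℝ) ^ ((1:ℝ)/3) else 1)

lemma mem18 : (2 * (4:ℝ) ^ ((1:ℝ)/3)) ∈ {ρ : ℝ | ∃ x : V18 → ℝ, (∀ v, 0 ≤ x v) ∧ x ≠ 0 ∧
    ρ = (Nat.factorial 3 : ℝ) * (∑ e ∈ E18, ∏ v ∈ e, x v) / (∑ v, x v ^ 3)} := by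
  refine ⟨x0, ?_, ?_, ?_⟩
  · rintro (u | ⟨b, j⟩)
    · exact Real.rpow_nonneg (by norm_num) _
    · simp only [x0, Sum.elim_inr]
      split_ifs <;> first | exact Real.rpow_nonneg (by norm_num) _ | norm_num
  · intro h
    have := congrFun h (Sum.inl ())
    simp [x0] at this
  · have hfact : (Nat.factorial 3 : ℝ) = 6 := by norm_num [Nat.factorial]
    rw [hfact, sum_E18]
    simp only [prod_inner, prod_outer, Fin.sum_univ_three,
      Fintype.sum_sum_type, Fintype.sum_prod_type, Fin.sum_univ_four,
      Finset.univ_unique, Finset.sum_singleton]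
    simp only [x0, Sum.elim_inl, Sum.elim_inr]
    norm_num [show ((2:Fin 4) = 0) = False by simp, show ((2:Fin 4) = 1) = False by simp,
      show ((3:Fin 4) = 0) = False by simp, show ((3:Fin 4) = 1) = False by simp,
      rpow_third_cube]
    have h27 : (9:ℝ) ^ ((1:ℝ)/3) * ((4:ℝ) ^ ((1:ℝ)/3) * (3:ℝ) ^ ((1:ℝ)/3))
        = 3 * (4:ℝ) ^ ((1:ℝ)/3) := by
      rw [show (9:ℝ) ^ ((1:ℝ)/3) * ((4:ℝ) ^ ((1:ℝ)/3) * (3:ℝ) ^ ((1:ℝ)/3))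
          = ((9:ℝ) ^ ((1:ℝ)/3) * (3:ℝ) ^ ((1:ℝ)/3)) * (4:ℝ) ^ ((1:ℝ)/3) by ring,
        ← Real.mul_rpow (by norm_num) (by norm_num),
        show (9:ℝ) * 3 = 27 by norm_num,
        show (27:ℝ) = 3 ^ (3:ℕ) by norm_num,
        ← Real.rpow_natCast (3:ℝ) 3, ← Real.rpow_mul (by norm_num)]
      norm_num
    rw [h27]
    ring

/-- the labeling `B18` is 1/4-normal on `Ẽ₆^{(3)}`, and hence
`ρ(Ẽ₆^{(3)}) = 2·4^{1/3}`. -/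
theorem tildeE6_quarter_normal_and_specRad :
    (∀ b : Fin 3, B18 (Sum.inl ()) (inner18 b) = 1/3 ∧
      B18 (Sum.inr (b, 0)) (inner18 b) = 3/4 ∧
      B18 (Sum.inr (b, 1)) (inner18 b) = 1 ∧
      B18 (Sum.inr (b, 0)) (outer18 b) = 1/4 ∧
      B18 (Sum.inr (b, 2)) (outer18 b) = 1 ∧
      B18 (Sum.inr (b, 3)) (outer18 b) = 1) ∧
    (∀ v : V18, ∑ e ∈ E18.filter (fun e => v ∈ e), B18 v e = 1) ∧
    (∀ e ∈ E18, ∏ v ∈ e, B18 v e = 1/4) ∧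
    specRad 3 E18 = 2 * (4 : ℝ) ^ ((1 : ℝ) / 3) := by
  refine ⟨?_, ?_, ?_, ?_⟩
  · intro b
    refine ⟨B18_center_inner b, ?_, ?_, ?_, ?_, ?_⟩ <;>
      simp [B18_spine_inner, B18_l1_inner, B18_spine_outer, B18_l2_outer, B18_l3_outer]
  · intro v
    have h0 : ∀ e, v ∉ e → B18 v e = 0 := by intro e he; simp [B18, he]
    rw [Finset.sum_filter]
    have h1 : ∀ e ∈ E18, (if v ∈ e then B18 v e else 0) = B18 v e := by
      intro e _
      split_ifs with h
      · rfl
      · exact (h0 e h).symm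
    rw [Finset.sum_congr rfl h1, sum_E18]
    rcases v with u | ⟨b, j⟩
    · cases u
      norm_num [B18_center_inner, B18_center_outer, Fin.sum_univ_three]
    · fin_cases j <;>
        simp [B18_spine_inner, B18_spine_outer, B18_l1_inner, B18_l1_outer,
          B18_l2_inner, B18_l2_outer, B18_l3_inner, B18_l3_outer,
          Finset.sum_ite_eq, Fin.sum_univ_three] <;> norm_num
  · intro e he
    rw [E18, Finset.mem_union] at he
    rcases he with he | he <;> simp only [Finset.mem_image, Finset.mem_univ, true_and] at he <;>
      obtain ⟨b, rfl⟩ := he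
    · rw [prod_inner (fun v => B18 v (inner18 b)) b]
      norm_num [B18_center_inner, B18_spine_inner, B18_l1_inner]
    · rw [prod_outer (fun v => B18 v (outer18 b)) b]
      norm_num [B18_spine_outer, B18_l2_outer, B18_l3_outer]
  · exact le_antisymm (csSup_le ⟨_, mem18⟩ ub18) (le_csSup ⟨_, ub18⟩ mem18)
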